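/- Let p_k = ((5/2)·cos(2πk/9), (5/2)·sin(2πk/9)) for k = 0, …, 8 be nine equidistant points on the circle of radius 5/2 centered at the origin in ℝ². For every ε with √3/2 ≤ ε < 1, the union ⋃_{k} closedBall(p_k, ε), with the subspace topology, is homotopy equivalent to the circle {x ∈ ℝ² : ‖x‖ = 5/2}. -/

import Mathlib

open Metric Real

/-- Nine equidistant points on the circle of radius 5/2 centered at the origin in ℝ². -/
noncomputable def ninePoint (k : Fin 9) : EuclideanSpace ℝ (Fin 2) :=
  !₂[(5 / 2 : ℝ) * Real.cos (2 * π * k / 9), (5 / 2 : ℝ) * Real.sin (2 * π * k / 9)]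

namespace NinePointAux

open scoped RealInnerProductSpace

local notation "E" => EuclideanSpace ℝ (Fin 2)

lemma ninePoint_zero (k : Fin 9) : ninePoint k 0 = (5/2) * Real.cos (2*π*k/9) := rfl
lemma ninePoint_one (k : Fin 9) : ninePoint k 1 = (5/2) * Real.sin (2*π*k/9) := rfl

lemma inner_ninePoint (x : E) (k : Fin 9) :
    ⟪x, ninePoint k⟫ = (5/2) * (x 0 * Real.cos (2*π*k/9) + x 1 * Real.sin (2*π*k/9)) := by
  simp only [PiLp.inner_apply, RCLike.inner_apply, starRingEnd_apply, star_trivial,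
    Fin.sum_univ_two, ninePoint_zero, ninePoint_one]
  ring

lemma norm_sq_eq (x : E) : ‖x‖^2 = x 0 ^2 + x 1 ^2 := by
  rw [← real_inner_self_eq_norm_sq]
  simp only [PiLp.inner_apply, RCLike.inner_apply, starRingEnd_apply, star_trivial,
    Fin.sum_univ_two]
  ring

lemma norm_ninePoint (k : Fin 9) : ‖ninePoint k‖ = 5/2 := by
  have h := norm_sq_eq (ninePoint k)
  rw [ninePoint_zero, ninePoint_one] at h
  have hsc := Real.sin_sq_add_cos_sq (2*π*k/9)
  have : ‖ninePoint k‖^2 = (5/2)^2 := by nlinarith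
  have h2 : (0:ℝ) ≤ 5/2 := by norm_num
  nlinarith [norm_nonneg (ninePoint k)]

lemma dist_sq (x : E) (k : Fin 9) :
    dist x (ninePoint k) ^ 2 = ‖x‖^2 - 2*⟪x, ninePoint k⟫ + 25/4 := by
  rw [dist_eq_norm, norm_sub_sq_real, norm_ninePoint]
  norm_num

/-- Every direction is within `π/9` of one of the nine points. -/
lemma coverage (x : E) (hx : x ≠ 0) :
    ∃ k : Fin 9, ‖x‖ * ((5/2) * Real.cos (π/9)) ≤ ⟪x, ninePoint k⟫ := by
  have hπ : 0 < π := Real.pi_pos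
  set z : ℂ := ⟨x 0, x 1⟩ with hz_def
  have hz : z ≠ 0 := by
    intro h
    apply hx
    have h0 : x 0 = 0 := congrArg Complex.re h
    have h1 : x 1 = 0 := congrArg Complex.im h
    ext i
    fin_cases i <;> simpa
  have habs : ‖z‖ = ‖x‖ := by
    rw [Complex.norm_def, Complex.normSq_mk]
    rw [show x 0 * x 0 + x 1 * x 1 = ‖x‖^2 by rw [norm_sq_eq]; ring]
    exact Real.sqrt_sq (norm_nonneg x)
  set θ := Complex.arg z with hθ_def
  have hn0 : ‖x‖ ≠ 0 := norm_ne_zero_iff.mpr hx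
  have hcos : x 0 = ‖x‖ * Real.cos θ := by
    have h := Complex.cos_arg hz
    rw [habs] at h
    have h2 : Real.cos θ = x 0 / ‖x‖ := h
    rw [h2]
    field_simp
  have hsin : x 1 = ‖x‖ * Real.sin θ := by
    have h := Complex.sin_arg z
    rw [habs] at h
    have h2 : Real.sin θ = x 1 / ‖x‖ := h
    rw [h2]
    field_simp
  set m : ℤ := round (θ * 9 / (2*π)) with hm_def
  have h0 : 0 ≤ m % 9 := Int.emod_nonneg m (by norm_num)
  have h9 : m % 9 < 9 := Int.emod_lt_of_pos m (by norm_num)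
  refine ⟨⟨(m % 9).toNat, by omega⟩, ?_⟩
  have hkval : (((m % 9).toNat : ℕ) : ℝ) = ((m % 9 : ℤ) : ℝ) := by
    exact_mod_cast congrArg (Int.cast : ℤ → ℝ) (Int.toNat_of_nonneg h0)
  -- the angle difference
  have hround : |θ * 9 / (2*π) - m| ≤ 1/2 := abs_sub_round _
  set d := θ - 2*π*m/9 with hd_def
  have hdeq : d = (2*π/9) * (θ * 9 / (2*π) - m) := by
    field_simp [hd_def]
    ring
  have hdabs : |d| ≤ π/9 := by
    rw [hdeq, abs_mul, abs_of_pos (by positivity : (0:ℝ) < 2*π/9)]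
    calc 2*π/9 * |θ * 9 / (2*π) - ↑m| ≤ 2*π/9 * (1/2) := by
          exact mul_le_mul_of_nonneg_left hround (by positivity)
      _ = π/9 := by ring
  have hcosd : Real.cos (π/9) ≤ Real.cos d := by
    rw [← Real.cos_abs d]
    apply Real.cos_le_cos_of_nonneg_of_le_pi (abs_nonneg d) (by linarith [hπ]) hdabs
  -- inner product computation
  have hdm : 9 * (m / 9) + m % 9 = m := Int.mul_ediv_add_emod m 9
  have hangle : 2*π*(((m % 9).toNat : ℕ) : ℝ)/9 = 2*π*m/9 - (m/9 : ℤ) * (2*π) := by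
    rw [hkval]
    have : ((m % 9 : ℤ) : ℝ) = (m : ℝ) - 9 * ((m/9 : ℤ) : ℝ) := by
      push_cast
      exact_mod_cast by exact_mod_cast congrArg (Int.cast : ℤ → ℝ) (by omega : (m % 9) = m - 9*(m/9))
    rw [this]; ring
  rw [inner_ninePoint]
  rw [show ((⟨(m % 9).toNat, by omega⟩ : Fin 9) : ℝ) = (((m % 9).toNat : ℕ) : ℝ) by norm_cast]
  rw [hcos, hsin]
  have key : Real.cos θ * Real.cos (2*π*(((m % 9).toNat : ℕ) : ℝ)/9)
      + Real.sin θ * Real.sin (2*π*(((m % 9).toNat : ℕ) : ℝ)/9) = Real.cos d := by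
    rw [← Real.cos_sub, hangle]
    rw [show θ - (2*π*m/9 - (m/9 : ℤ) * (2*π)) = d + (m/9 : ℤ) * (2*π) by rw [hd_def]; ring]
    exact Real.cos_add_int_mul_two_pi d _
  have hnx : 0 ≤ ‖x‖ := norm_nonneg x
  calc ‖x‖ * ((5/2) * Real.cos (π/9)) ≤ ‖x‖ * ((5/2) * Real.cos d) := by nlinarith
    _ = 5/2 * (‖x‖ * Real.cos θ * Real.cos (2*π*(((m % 9).toNat : ℕ) : ℝ)/9)
        + ‖x‖ * Real.sin θ * Real.sin (2*π*(((m % 9).toNat : ℕ) : ℝ)/9)) := by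
        rw [← key]; ring

lemma sin_bound : (5/2) * Real.sin (π/9) ≤ Real.sqrt 3 / 2 := by
  have hπ : 0 < π := Real.pi_pos
  have h3 : Real.sin (3 * (π/9)) = Real.sqrt 3 / 2 := by
    rw [show 3 * (π/9) = π/3 by ring, Real.sin_pi_div_three]
  have htm := Real.sin_three_mul (π/9)
  set s := Real.sin (π/9) with hs
  have hs0 : 0 ≤ s := Real.sin_nonneg_of_nonneg_of_le_pi (by positivity) (by linarith)
  have hslt : s < π/9 := Real.sin_lt (by positivity)
  have hπlt : π < 3.15 := Real.pi_lt_d2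
  have hsmall : s < 0.35 := by linarith
  have hs2 : s^2 ≤ 0.1225 := by nlinarith
  have hs3 : 4*s^3 ≤ 0.49*s := by nlinarith [mul_le_mul_of_nonneg_right hs2 hs0]
  nlinarith [htm, h3]

lemma sqrt3_ge_one : (1:ℝ) ≤ Real.sqrt 3 := by
  nlinarith [Real.sq_sqrt (by norm_num : (0:ℝ) ≤ 3), Real.sqrt_nonneg 3]

section Eps
variable {ε : ℝ} (hε₁ : Real.sqrt 3 / 2 ≤ ε) (hε₂ : ε < 1)

include hε₁ in
lemma eps_pos : 0 < ε := by
  have := sqrt3_ge_one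
  linarith

include hε₁ in
lemma scaled_mem (x : E) (hx : x ≠ 0) (k : Fin 9)
    (hk : ‖x‖ * ((5/2) * Real.cos (π/9)) ≤ ⟪x, ninePoint k⟫) :
    ((5/2) * Real.cos (π/9) / ‖x‖) • x ∈ closedBall (ninePoint k) ε := by
  have hn : 0 < ‖x‖ := norm_pos_iff.mpr hx
  set c := Real.cos (π/9) with hc
  have hc0 : 0 < c := Real.cos_pos_of_mem_Ioo ⟨by nlinarith [Real.pi_pos], by nlinarith [Real.pi_pos]⟩
  set y : E := ((5/2) * c / ‖x‖) • x with hy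
  have hny : ‖y‖ = (5/2) * c := by
    rw [hy, norm_smul, Real.norm_eq_abs, abs_of_pos (by positivity)]
    field_simp
  have hinner : ⟪y, ninePoint k⟫ = ((5/2) * c / ‖x‖) * ⟪x, ninePoint k⟫ :=
    real_inner_smul_left x (ninePoint k) _
  have hd2 : dist y (ninePoint k) ^ 2 ≤ (25/4) * (1 - c^2) := by
    rw [dist_sq, hny, hinner]
    have : ((5/2) * c / ‖x‖) * (‖x‖ * ((5/2) * c)) ≤ ((5/2) * c / ‖x‖) * ⟪x, ninePoint k⟫ := by
      apply mul_le_mul_of_nonneg_left _ (by positivity)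
      calc ‖x‖ * ((5/2) * c) = ‖x‖ * ((5/2) * Real.cos (π/9)) := by rw [hc]
        _ ≤ ⟪x, ninePoint k⟫ := hk
    have heq : ((5/2) * c / ‖x‖) * (‖x‖ * ((5/2) * c)) = (25/4) * c^2 := by
      field_simp; ring
    nlinarith
  have hsc := Real.sin_sq_add_cos_sq (π/9)
  have hsin : (25/4) * (1 - c^2) = ((5/2) * Real.sin (π/9))^2 := by
    rw [hc]; nlinarith
  have hsb := sin_bound
  have hsin0 : 0 ≤ Real.sin (π/9) :=
    Real.sin_nonneg_of_nonneg_of_le_pi (by positivity) (by nlinarith [Real.pi_pos])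
  rw [mem_closedBall]
  nlinarith [dist_nonneg (x := y) (y := ninePoint k), eps_pos hε₁]

include hε₁ hε₂ in
lemma exists_good_ball (x : E) (hx : x ∈ ⋃ k : Fin 9, closedBall (ninePoint k) ε) :
    ∃ k : Fin 9, x ∈ closedBall (ninePoint k) ε ∧
      ((5/2) * Real.cos (π/9) / ‖x‖) • x ∈ closedBall (ninePoint k) ε := by
  obtain ⟨_, ⟨j, rfl⟩, hj⟩ := hx
  rw [mem_closedBall] at hj
  have hnx : (3/2 : ℝ) ≤ ‖x‖ := by
    have h1 : ‖ninePoint j‖ - ‖x‖ ≤ dist x (ninePoint j) := by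
      rw [dist_eq_norm]
      have := norm_sub_norm_le (ninePoint j) x
      rwa [norm_sub_rev] at this
    rw [norm_ninePoint] at h1
    linarith
  have hx0 : x ≠ 0 := by
    intro h; rw [h, norm_zero] at hnx; linarith
  -- choose k maximizing the inner product
  obtain ⟨k, -, hkmax⟩ := Finset.exists_max_image Finset.univ
    (fun k : Fin 9 => ⟪x, ninePoint k⟫) ⟨j, Finset.mem_univ j⟩
  obtain ⟨k', hk'⟩ := coverage x hx0
  have hthr : ‖x‖ * ((5/2) * Real.cos (π/9)) ≤ ⟪x, ninePoint k⟫ :=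
    le_trans hk' (hkmax k' (Finset.mem_univ k'))
  refine ⟨k, ?_, scaled_mem hε₁ x hx0 k hthr⟩
  rw [mem_closedBall]
  have h1 : dist x (ninePoint k) ^ 2 ≤ dist x (ninePoint j) ^ 2 := by
    rw [dist_sq, dist_sq]
    have := hkmax j (Finset.mem_univ j)
    linarith
  have he : 0 < ε := eps_pos hε₁
  nlinarith [dist_nonneg (x := x) (y := ninePoint k), dist_nonneg (x := x) (y := ninePoint j)]

include hε₂ in
lemma norm_pos_of_mem (x : E) (hx : x ∈ ⋃ k : Fin 9, closedBall (ninePoint k) ε) :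
    0 < ‖x‖ := by
  obtain ⟨_, ⟨j, rfl⟩, hj⟩ := hx
  rw [mem_closedBall] at hj
  have h1 : ‖ninePoint j‖ - ‖x‖ ≤ dist x (ninePoint j) := by
    rw [dist_eq_norm]
    have := norm_sub_norm_le (ninePoint j) x
    rwa [norm_sub_rev] at this
  rw [norm_ninePoint] at h1
  linarith

end Eps

end NinePointAux

theorem stmt_12 (ε : ℝ) (hε₁ : Real.sqrt 3 / 2 ≤ ε) (hε₂ : ε < 1) :
    Nonempty (ContinuousMap.HomotopyEquiv
      (↥(⋃ k : Fin 9, closedBall (ninePoint k) ε))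
      (↥({x : EuclideanSpace ℝ (Fin 2) | ‖x‖ = 5 / 2}))) := by
  classical
  set E := EuclideanSpace ℝ (Fin 2)
  set U : Set E := ⋃ k : Fin 9, closedBall (ninePoint k) ε with hU
  set S : Set E := {x : E | ‖x‖ = 5 / 2} with hS
  set c : ℝ := Real.cos (π/9) with hc
  have hc0 : 0 < c := Real.cos_pos_of_mem_Ioo
    ⟨by nlinarith [Real.pi_pos], by nlinarith [Real.pi_pos]⟩
  -- the forward map: radial projection onto the circle
  have hfmem : ∀ x : U, ((5/2) / ‖(x : E)‖) • (x : E) ∈ S := by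
    intro x
    have hn : 0 < ‖(x:E)‖ := NinePointAux.norm_pos_of_mem hε₂ _ x.2
    simp only [hS, Set.mem_setOf_eq, norm_smul, Real.norm_eq_abs,
      abs_of_pos (by positivity : (0:ℝ) < (5/2) / ‖(x:E)‖)]
    field_simp
  have hgmem : ∀ s : S, c • (s : E) ∈ U := by
    intro s
    have hns : ‖(s:E)‖ = 5/2 := s.2
    have hs0 : (s:E) ≠ 0 := by
      intro h; rw [h, norm_zero] at hns; norm_num at hns
    obtain ⟨k, hk⟩ := NinePointAux.coverage (s:E) hs0
    have := NinePointAux.scaled_mem hε₁ (s:E) hs0 k hk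
    rw [hns] at this
    have heq : ((5/2) * Real.cos (π/9) / (5/2)) = c := by rw [hc]; ring
    rw [heq] at this
    exact Set.mem_iUnion.mpr ⟨k, this⟩
  have hcontval : Continuous fun x : U => (x : E) := continuous_subtype_val
  have hnormne : ∀ x : U, ‖(x:E)‖ ≠ 0 :=
    fun x => ne_of_gt (NinePointAux.norm_pos_of_mem hε₂ _ x.2)
  let f : C(U, S) := ⟨fun x => ⟨((5/2) / ‖(x : E)‖) • (x : E), hfmem x⟩, by
    apply Continuous.subtype_mk
    exact ((continuous_const.div hcontval.norm hnormne).smul hcontval)⟩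
  let g : C(S, U) := ⟨fun s => ⟨c • (s : E), hgmem s⟩, by
    apply Continuous.subtype_mk
    exact continuous_subtype_val.const_smul c⟩
  -- homotopy F(t, x) = ((1-t) * ((5/2)*c/‖x‖) + t) • x  from g∘f to id
  have hFmem : ∀ (t : unitInterval) (x : U),
      ((1 - (t:ℝ)) * ((5/2) * c / ‖(x:E)‖) + (t:ℝ)) • (x : E) ∈ U := by
    intro t x
    obtain ⟨k, hk1, hk2⟩ := NinePointAux.exists_good_ball hε₁ hε₂ (x:E) x.2
    have hcomb : ((1 - (t:ℝ)) * ((5/2) * c / ‖(x:E)‖) + (t:ℝ)) • (x : E)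
        = (1 - (t:ℝ)) • (((5/2) * c / ‖(x:E)‖) • (x:E)) + (t:ℝ) • (x:E) := by
      rw [smul_smul, ← add_smul]
    rw [hcomb]
    refine Set.mem_iUnion.mpr ⟨k, ?_⟩
    exact (convex_closedBall (ninePoint k) ε) hk2 hk1
      (sub_nonneg.mpr t.2.2) t.2.1 (by ring)
  let F : ContinuousMap.Homotopy (g.comp f) (ContinuousMap.id U) :=
    { toFun := fun p => ⟨((1 - (p.1:ℝ)) * ((5/2) * c / ‖(p.2:E)‖) + (p.1:ℝ)) • (p.2 : E),
        hFmem p.1 p.2⟩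
      continuous_toFun := by
        apply Continuous.subtype_mk
        have h1 : Continuous fun p : unitInterval × U => (p.2 : E) :=
          continuous_subtype_val.comp continuous_snd
        have ht : Continuous fun p : unitInterval × U => (p.1 : ℝ) :=
          continuous_subtype_val.comp continuous_fst
        have h2 : Continuous fun p : unitInterval × U => (5/2) * c / ‖(p.2:E)‖ :=
          continuous_const.div h1.norm (fun p => hnormne p.2)
        exact (((continuous_const.sub ht).mul h2).add ht).smul h1
      map_zero_left := by
        intro x
        apply Subtype.ext
        show ((1 - (0:ℝ)) * ((5/2) * c / ‖(x:E)‖) + (0:ℝ)) • (x : E)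
          = c • (((5/2) / ‖(x : E)‖) • (x : E))
        rw [smul_smul]
        congr 1
        field_simp
        ring
      map_one_left := by
        intro x
        apply Subtype.ext
        show ((1 - (1:ℝ)) * ((5/2) * c / ‖(x:E)‖) + (1:ℝ)) • (x : E) = (x : E)
        rw [show (1 - (1:ℝ)) * ((5/2) * c / ‖(x:E)‖) + (1:ℝ) = 1 by ring, one_smul] }
  have hfg : f.comp g = ContinuousMap.id S := by
    apply ContinuousMap.ext
    intro s
    apply Subtype.ext
    show ((5/2) / ‖c • (s : E)‖) • (c • (s : E)) = (s : E)
    have hns : ‖(s:E)‖ = 5/2 := s.2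
    rw [norm_smul, Real.norm_eq_abs, abs_of_pos hc0, hns, smul_smul]
    rw [show (5/2) / (c * (5/2)) * c = 1 by field_simp, one_smul]
  exact ⟨{ toFun := f
           invFun := g
           left_inv := ⟨F⟩
           right_inv := ⟨hfg ▸ ContinuousMap.Homotopy.refl (ContinuousMap.id S)⟩ }⟩
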